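/- Assume that A⋈^{f,g}(𝔟,𝔠) is a Gaussian local ring. If 𝔟² ≠ 0, then 𝔠² = 0. -/

import Mathlib

/-- The bi-amalgamation of `A` with `(B, C)` along `(𝔟, 𝔠)` with respect to `(f, g)`:
the subring `{(f a + β, g a + γ) | a ∈ A, β ∈ 𝔟, γ ∈ 𝔠}` of `B × C`. -/
def biAmalgamation {A B C : Type*} [CommRing A] [CommRing B] [CommRing C]
    (f : A →+* B) (g : A →+* C) (𝔟 : Ideal B) (𝔠 : Ideal C) : Subring (B × C) where
  carrier := {x | ∃ a β γ, β ∈ 𝔟 ∧ γ ∈ 𝔠 ∧ x = (f a + β, g a + γ)}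
  one_mem' := ⟨1, 0, 0, 𝔟.zero_mem, 𝔠.zero_mem, by simp [Prod.ext_iff]⟩
  zero_mem' := ⟨0, 0, 0, 𝔟.zero_mem, 𝔠.zero_mem, by simp [Prod.ext_iff]⟩
  add_mem' := by
    rintro x y ⟨a₁, β₁, γ₁, hβ₁, hγ₁, rfl⟩ ⟨a₂, β₂, γ₂, hβ₂, hγ₂, rfl⟩
    exact ⟨a₁ + a₂, β₁ + β₂, γ₁ + γ₂, 𝔟.add_mem hβ₁ hβ₂, 𝔠.add_mem hγ₁ hγ₂, by
      simp only [Prod.ext_iff, map_add, Prod.fst_add, Prod.snd_add]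
      constructor <;> ring⟩
  neg_mem' := by
    rintro x ⟨a, β, γ, hβ, hγ, rfl⟩
    exact ⟨-a, -β, -γ, 𝔟.neg_mem hβ, 𝔠.neg_mem hγ, by
      simp only [Prod.ext_iff, map_neg, Prod.fst_neg, Prod.snd_neg]
      constructor <;> ring⟩
  mul_mem' := by
    rintro x y ⟨a₁, β₁, γ₁, hβ₁, hγ₁, rfl⟩ ⟨a₂, β₂, γ₂, hβ₂, hγ₂, rfl⟩
    refine ⟨a₁ * a₂, f a₁ * β₂ + β₁ * f a₂ + β₁ * β₂,
      g a₁ * γ₂ + γ₁ * g a₂ + γ₁ * γ₂,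
      𝔟.add_mem (𝔟.add_mem (Ideal.mul_mem_left _ _ hβ₂) (Ideal.mul_mem_right _ _ hβ₁))
        (Ideal.mul_mem_right _ _ hβ₁),
      𝔠.add_mem (𝔠.add_mem (Ideal.mul_mem_left _ _ hγ₂) (Ideal.mul_mem_right _ _ hγ₁))
        (Ideal.mul_mem_right _ _ hγ₁), by
      simp only [Prod.ext_iff, map_mul, Prod.fst_mul, Prod.snd_mul]
      constructor <;> ring⟩

/-- The content ideal of a polynomial: the ideal generated by its coefficients. -/
def contentIdeal {R : Type*} [CommRing R] (p : Polynomial R) : Ideal R :=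
  Ideal.span (Set.range p.coeff)

/-- A commutative ring is Gaussian if the content ideal is multiplicative:
`c(pq) = c(p)c(q)` for all polynomials `p, q`. -/
def IsGaussianRing (R : Type*) [CommRing R] : Prop :=
  ∀ p q : Polynomial R, contentIdeal (p * q) = contentIdeal p * contentIdeal q



open Polynomial in
lemma coeff_mem_contentIdeal {R : Type*} [CommRing R] (p : Polynomial R) (n : ℕ) :
    p.coeff n ∈ _root_.contentIdeal p :=
  Ideal.subset_span ⟨n, rfl⟩

lemma contentIdeal_zero {R : Type*} [CommRing R] : _root_.contentIdeal (0 : Polynomial R) = ⊥ := by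
  rw [eq_bot_iff, contentIdeal, Ideal.span_le]
  rintro _ ⟨n, rfl⟩
  simp

open Polynomial in
/-- In a Gaussian ring, two square-zero elements have zero product. -/
lemma gaussian_mul_eq_zero {R : Type*} [CommRing R] (hG : IsGaussianRing R)
    {a b : R} (ha : a ^ 2 = 0) (hb : b ^ 2 = 0) : a * b = 0 := by
  set p : Polynomial R := C a * X + C b with hp
  set q : Polynomial R := C a * X - C b with hq
  have hpq : p * q = 0 := by
    have : p * q = C (a ^ 2) * X ^ 2 - C (b ^ 2) := by
      simp only [hp, hq, map_pow]; ring
    rw [this, ha, hb]; simp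
  have hmem : a * b ∈ _root_.contentIdeal p * _root_.contentIdeal q := by
    have h1 : a ∈ _root_.contentIdeal p := by
      have := _root_.coeff_mem_contentIdeal p 1
      simpa [hp] using this
    have h2 : -b ∈ _root_.contentIdeal q := by
      have := _root_.coeff_mem_contentIdeal q 0
      simpa [hq] using this
    have := Ideal.mul_mem_mul h1 h2
    have h3 : a * b = -(a * (-b)) := by ring
    rw [h3]
    exact neg_mem this
  rw [← hG p q, hpq, _root_.contentIdeal_zero, Ideal.mem_bot] at hmem
  exact hmem

open Polynomial in
/-- Key lemma: in a local Gaussian ring, if `x * y = 0` then `x²` divides `y²`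
or `y²` divides `x²`. -/
lemma gaussian_local_key {R : Type*} [CommRing R] (hG : IsGaussianRing R)
    (hloc : IsLocalRing R) {x y : R} (hxy : x * y = 0) :
    (∃ s, x ^ 2 = s * y ^ 2) ∨ (∃ s, y ^ 2 = s * x ^ 2) := by
  set p : Polynomial R := C (x + y) * X + C x with hp
  set q : Polynomial R := C (x + y) * X + C y with hq
  set c : R := x ^ 2 + y ^ 2 with hc
  have hpq : p * q = C c * (X ^ 2 + X) := by
    have e : p * q = C ((x+y)*(x+y)) * X ^ 2 + C ((x+y)*y + x*(x+y)) * X + C (x * y) := by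
      simp only [hp, hq, map_mul, map_add]; ring
    rw [e, hxy, map_zero, add_zero,
      show (x+y)*(x+y) = c by rw [hc]; linear_combination 2 * hxy,
      show (x+y)*y + x*(x+y) = c by rw [hc]; linear_combination 2 * hxy]
    ring
  have hle : _root_.contentIdeal (p * q) ≤ Ideal.span {c} := by
    rw [_root_.contentIdeal, Ideal.span_le]
    rintro _ ⟨n, rfl⟩
    rw [hpq, coeff_C_mul]
    exact Ideal.mem_span_singleton.mpr (dvd_mul_right _ _)
  have hx2 : x ^ 2 ∈ Ideal.span {c} := by
    apply hle
    rw [hG p q]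
    have h1 : x ∈ _root_.contentIdeal p := by
      have := _root_.coeff_mem_contentIdeal p 0
      simpa [hp] using this
    have h2 : x + y ∈ _root_.contentIdeal q := by
      have := _root_.coeff_mem_contentIdeal q 1
      simpa [hq] using this
    have := Ideal.mul_mem_mul h1 h2
    have e : x ^ 2 = x * (x + y) := by linear_combination -hxy
    rwa [e]
  obtain ⟨r, hr⟩ := Ideal.mem_span_singleton.mp hx2
  -- hr : x ^ 2 = c * r
  have h2 : (1 - r) * x ^ 2 = r * y ^ 2 := by
    rw [hc] at hr; linear_combination hr
  haveI := hloc
  rcases IsLocalRing.isUnit_or_isUnit_one_sub_self r with h | h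
  · obtain ⟨v, hv⟩ := isUnit_iff_exists_inv'.mp h
    right
    exact ⟨v * (1 - r), by linear_combination (-v) * h2 + (-(y ^ 2)) * hv⟩
  · obtain ⟨v, hv⟩ := isUnit_iff_exists_inv'.mp h
    left
    exact ⟨v * r, by linear_combination v * h2 + (-(x ^ 2)) * hv⟩

/-- If `A ⋈^{f,g} (𝔟,𝔠)` is a Gaussian local ring and `𝔟² ≠ 0`, then `𝔠² = 0`. -/
theorem biAmalgamation_gaussian_sq {A B C : Type*} [CommRing A] [CommRing B] [CommRing C]
    (f : A →+* B) (g : A →+* C) (𝔟 : Ideal B) (𝔠 : Ideal C)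
    (hcomp : 𝔟.comap f = 𝔠.comap g)
    (hG : IsGaussianRing ↥(biAmalgamation f g 𝔟 𝔠))
    (hloc : IsLocalRing ↥(biAmalgamation f g 𝔟 𝔠))
    (hb : 𝔟 ^ 2 ≠ ⊥) :
    𝔠 ^ 2 = ⊥ := by
  set R := biAmalgamation f g 𝔟 𝔠 with hR
  have hxmem : ∀ β ∈ 𝔟, ((β, 0) : B × C) ∈ R := fun β hβ =>
    ⟨0, β, 0, hβ, 𝔠.zero_mem, by simp⟩
  have hymem : ∀ γ ∈ 𝔠, ((0, γ) : B × C) ∈ R := fun γ hγ =>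
    ⟨0, 0, γ, 𝔟.zero_mem, hγ, by simp⟩
  -- Step 1: for all β ∈ 𝔟, γ ∈ 𝔠, β² = 0 or γ² = 0
  have N1 : ∀ β ∈ 𝔟, ∀ γ ∈ 𝔠, β ^ 2 = 0 ∨ γ ^ 2 = 0 := by
    intro β hβ γ hγ
    set x : R := ⟨(β, 0), hxmem β hβ⟩ with hxdef
    set y : R := ⟨(0, γ), hymem γ hγ⟩ with hydef
    have hxy : x * y = 0 := by
      apply Subtype.ext
      simp [hxdef, hydef, Prod.ext_iff]
    rcases gaussian_local_key hG hloc hxy with ⟨s, hs⟩ | ⟨s, hs⟩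
    · left
      have := congrArg (fun t : R => (t : B × C).1) hs
      simpa [hxdef, hydef, pow_two] using this
    · right
      have := congrArg (fun t : R => (t : B × C).2) hs
      simpa [hxdef, hydef, pow_two] using this
  -- extract a nonzero product from 𝔟²
  obtain ⟨β, hβ, β', hβ', hββ'⟩ : ∃ β ∈ 𝔟, ∃ β' ∈ 𝔟, β * β' ≠ 0 := by
    by_contra h
    push_neg at h
    refine hb ?_
    rw [pow_two, eq_bot_iff, Ideal.mul_le]
    intro r hr s hs
    rw [Ideal.mem_bot]
    exact h r hr s hs
  -- Step 2: all squares in 𝔠 vanish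
  have sqc : ∀ γ ∈ 𝔠, γ ^ 2 = 0 := by
    intro γ hγ
    by_contra hne
    have hb2 : β * β = 0 := by
      rw [← pow_two]; exact (N1 β hβ γ hγ).resolve_right hne
    have hb'2 : β' * β' = 0 := by
      rw [← pow_two]; exact (N1 β' hβ' γ hγ).resolve_right hne
    set a : R := ⟨(β, 0), hxmem β hβ⟩ with hadef
    set b : R := ⟨(β', 0), hxmem β' hβ'⟩ with hbdef
    have ha : a ^ 2 = 0 := by
      apply Subtype.ext
      simp [hadef, pow_two, Prod.ext_iff, hb2]
    have hb' : b ^ 2 = 0 := by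
      apply Subtype.ext
      simp [hbdef, pow_two, Prod.ext_iff, hb'2]
    have hab := gaussian_mul_eq_zero hG ha hb'
    apply hββ'
    have := congrArg (fun t : R => (t : B × C).1) hab
    simpa [hadef, hbdef] using this
  -- Step 3: conclude 𝔠² = 0
  rw [pow_two, eq_bot_iff, Ideal.mul_le]
  intro γ hγ γ' hγ'
  rw [Ideal.mem_bot]
  set a : R := ⟨(0, γ), hymem γ hγ⟩ with hadef
  set b : R := ⟨(0, γ'), hymem γ' hγ'⟩ with hbdef
  have ha : a ^ 2 = 0 := by
    apply Subtype.ext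
    have : γ * γ = 0 := by rw [← pow_two]; exact sqc γ hγ
    simp [hadef, pow_two, Prod.ext_iff, this]
  have hb' : b ^ 2 = 0 := by
    apply Subtype.ext
    have : γ' * γ' = 0 := by rw [← pow_two]; exact sqc γ' hγ'
    simp [hbdef, pow_two, Prod.ext_iff, this]
  have hab := gaussian_mul_eq_zero hG ha hb'
  have := congrArg (fun t : R => (t : B × C).2) hab
  simpa [hadef, hbdef] using this
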